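/- arXiv:1309.7511 — 4 statements merged into one kernel-verified Lean document; each statement's English description precedes it below -/
import Mathlib

section
/- The congruence lattice of any lattice L is a distributive lattice. -/
/-- A congruence of a lattice: an equivalence relation compatible with `⊔` and `⊓`. -/
structure LatCon (L : Type*) [Lattice L] extends Setoid L where
  sup_comp : ∀ {a b c d : L}, r a b → r c d → r (a ⊔ c) (b ⊔ d)
  inf_comp : ∀ {a b c d : L}, r a b → r c d → r (a ⊓ c) (b ⊓ d)

namespace LatCon
variable {L : Type*} [Lattice L]

instance : PartialOrder (LatCon L) where
  le c d := ∀ a b : L, c.r a b → d.r a b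
  le_refl _ _ _ h := h
  le_trans _ _ _ h₁ h₂ a b h := h₂ a b (h₁ a b h)
  le_antisymm c d h₁ h₂ := by
    cases c with | mk cs csup cinf =>
    cases d with | mk ds dsup dinf =>
    have : cs = ds := Setoid.ext fun {a b} => ⟨h₁ a b, h₂ a b⟩
    subst this
    rfl


instance : InfSet (LatCon L) where
  sInf s :=
  { r := fun a b => ∀ c ∈ s, c.r a b
    iseqv := ⟨fun a c hc => c.iseqv.refl a, fun h c hc => c.iseqv.symm (h c hc),
      fun h h' c hc => c.iseqv.trans (h c hc) (h' c hc)⟩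
    sup_comp := fun h h' c hc => c.sup_comp (h c hc) (h' c hc)
    inf_comp := fun h h' c hc => c.inf_comp (h c hc) (h' c hc) }

/-- The congruences of a lattice form a complete lattice under inclusion, with meets
given by intersection. -/
instance : CompleteLattice (LatCon L) :=
  completeLatticeOfInf _ fun _ =>
    ⟨fun c hc _ _ h => h c hc, fun _ hd _ _ h c hc => hd hc _ _ h⟩

end LatCon

/-!
Funayama–Nakayama. A pair `(a, b)` in `x ⊓ (y ⊔ z)` is joined by a chain
`a = e₀, e₁, …, eₙ = b` each of whose steps lies in `y` or in `z`. Apply the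
translation `e ↦ (e ⊔ a ⊓ b) ⊓ (a ⊔ b)`: it fixes `a` and `b`, preserves every
congruence, and maps all of `L` into the `x`-class of `a ⊓ b` (since `a ⊓ b ≡ a ⊔ b`
modulo `x`). So each translated step lies in `x ⊓ y` or in `x ⊓ z`, and the translated
chain witnesses `(a, b) ∈ (x ⊓ y) ⊔ (x ⊓ z)`.
-/

namespace LatCon

variable {L : Type*} [Lattice L]

open Relation

theorem rel_inf_iff {x y : LatCon L} {a b : L} : (x ⊓ y).r a b ↔ x.r a b ∧ y.r a b := by
  refine ⟨fun h => ⟨inf_le_left (b := y) a b h, inf_le_right (a := x) a b h⟩, ?_⟩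
  rintro ⟨hx, hy⟩ c (rfl | rfl)
  exacts [hx, hy]

theorem rel_inf_sup {c : LatCon L} {a b : L} (h : c.r a b) : c.r (a ⊓ b) (a ⊔ b) := by
  have hinf : c.r a (a ⊓ b) := by simpa using c.inf_comp (c.iseqv.refl a) h
  have hsup : c.r a (a ⊔ b) := by simpa using c.sup_comp (c.iseqv.refl a) h
  exact c.iseqv.trans (c.iseqv.symm hinf) hsup

theorem sup_inf_comp (c : LatCon L) {a b : L} (h : c.r a b) (u v : L) :
    c.r ((a ⊔ u) ⊓ v) ((b ⊔ u) ⊓ v) :=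
  c.inf_comp (c.sup_comp h (c.iseqv.refl u)) (c.iseqv.refl v)

theorem sup_inf_rel_left {c : LatCon L} {u v : L} (h : c.r u v) (e : L) : c.r ((e ⊔ u) ⊓ v) u := by
  simpa using c.inf_comp (c.iseqv.refl (e ⊔ u)) (c.iseqv.symm h)

theorem reflTransGen_map {y z : LatCon L} {f : L → L}
    (hf : ∀ (c : LatCon L) {a b : L}, c.r a b → c.r (f a) (f b)) {a b : L}
    (h : ReflTransGen (fun p q => y.r p q ∨ z.r p q) a b) :
    ReflTransGen (fun p q => y.r p q ∨ z.r p q) (f a) (f b) :=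
  ReflTransGen.lift f (fun _ _ hpq => hpq.imp (hf y) (hf z)) a b h

def supChain (y z : LatCon L) : LatCon L where
  r := ReflTransGen fun p q => y.r p q ∨ z.r p q
  iseqv :=
    ⟨fun _ => .refl,
      fun h => (@ReflTransGen.stdSymm _ _
        ⟨fun _ _ hpq => hpq.imp y.iseqv.symm z.iseqv.symm⟩).symm _ _ h,
      .trans⟩
  sup_comp {_ b _ _} h h' :=
    (reflTransGen_map (fun c _ _ hab => c.sup_comp hab (c.iseqv.refl _)) h).trans
      (reflTransGen_map (fun c _ _ hcd => c.sup_comp (c.iseqv.refl b) hcd) h')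
  inf_comp {_ b _ _} h h' :=
    (reflTransGen_map (fun c _ _ hab => c.inf_comp hab (c.iseqv.refl _)) h).trans
      (reflTransGen_map (fun c _ _ hcd => c.inf_comp (c.iseqv.refl b) hcd) h')

theorem reflTransGen_of_rel_sup {y z : LatCon L} {a b : L} (h : (y ⊔ z).r a b) :
    ReflTransGen (fun p q => y.r p q ∨ z.r p q) a b :=
  sup_le (a := y) (b := z) (c := supChain y z) (fun _ _ hy => .single (.inl hy))
    (fun _ _ hz => .single (.inr hz)) a b h

theorem sup_inf_rel_of_reflTransGen {x y z : LatCon L} {u v : L} (huv : x.r u v) {a b : L}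
    (h : ReflTransGen (fun p q => y.r p q ∨ z.r p q) a b) :
    (x ⊓ y ⊔ x ⊓ z).r ((a ⊔ u) ⊓ v) ((b ⊔ u) ⊓ v) := by
  induction h with
  | refl => exact (x ⊓ y ⊔ x ⊓ z).iseqv.refl _
  | @tail e f _ hstep ih =>
    refine (x ⊓ y ⊔ x ⊓ z).iseqv.trans ih ?_
    have hx : x.r ((e ⊔ u) ⊓ v) ((f ⊔ u) ⊓ v) :=
      x.iseqv.trans (sup_inf_rel_left huv e) (x.iseqv.symm (sup_inf_rel_left huv f))
    rcases hstep with hy | hz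
    · exact le_sup_left (b := x ⊓ z) _ _ (rel_inf_iff.2 ⟨hx, sup_inf_comp y hy u v⟩)
    · exact le_sup_right (a := x ⊓ y) _ _ (rel_inf_iff.2 ⟨hx, sup_inf_comp z hz u v⟩)

protected theorem inf_sup_le (x y z : LatCon L) : x ⊓ (y ⊔ z) ≤ x ⊓ y ⊔ x ⊓ z := by
  intro a b h
  obtain ⟨hx, hyz⟩ := rel_inf_iff.1 h
  have := sup_inf_rel_of_reflTransGen (rel_inf_sup hx) (reflTransGen_of_rel_sup hyz)
  rwa [sup_inf_self, inf_sup_self, sup_of_le_left (inf_le_right : a ⊓ b ≤ b),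
    inf_of_le_left (le_sup_right : b ≤ a ⊔ b)] at this

instance : DistribLattice (LatCon L) := .ofInfSupLe LatCon.inf_sup_le

end LatCon

/-- **Funayama–Nakayama.** The congruence lattice of any lattice is distributive. -/
theorem latCon_inf_sup_distrib (L : Type*) [Lattice L] (x y z : LatCon L) :
    x ⊓ (y ⊔ z) = (x ⊓ y) ⊔ (x ⊓ z) :=
  inf_sup_left x y z
end

section
/- Every finite sectionally complemented lattice is regular: each congruence is determined by any one of its congruence classes. -/
/-- A lattice is regular if each congruence is determined by any one of its classes:
two congruences having a congruence class in common are equal. -/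
def RegularLattice (L : Type*) [Lattice L] : Prop :=
  ∀ c d : LatCon L, (∃ a b : L, {x | c.r x a} = {x | d.r x b}) → c = d

/-- A lattice with least element is sectionally complemented if every interval `[⊥, b]`
is complemented. -/
def SectionallyComplemented (L : Type*) [Lattice L] [OrderBot L] : Prop :=
  ∀ a b : L, a ≤ b → ∃ c, a ⊓ c = ⊥ ∧ a ⊔ c = b

namespace LatCon

section Lattice
variable {L : Type*} [Lattice L] (c : LatCon L)

theorem rel_iff_inf_rel_sup {a b : L} : c.r a b ↔ c.r (a ⊓ b) (a ⊔ b) := by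
  constructor
  · intro hab
    have hinf : c.r (a ⊓ b) b := by simpa using c.inf_comp hab (c.iseqv.refl b)
    have hsup : c.r a (a ⊔ b) := by simpa using c.sup_comp (c.iseqv.refl a) hab
    exact c.iseqv.trans hinf (c.iseqv.trans (c.iseqv.symm hab) hsup)
  · intro h
    have ha : c.r a (a ⊔ b) := by simpa using c.sup_comp (c.iseqv.refl a) h
    have hb : c.r b (a ⊔ b) := by simpa using c.sup_comp (c.iseqv.refl b) h
    exact c.iseqv.trans ha (c.iseqv.symm hb)

theorem exists_isLeast_class [Finite L] (a : L) : ∃ m, IsLeast {x | c.r x a} m := by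
  obtain ⟨m, hm⟩ := (Set.toFinite {x | c.r x a}).exists_minimal ⟨a, c.iseqv.refl a⟩
  refine ⟨m, hm.prop, fun y hy => ?_⟩
  have hmy : c.r (m ⊓ y) a := by simpa using c.inf_comp hm.prop hy
  exact (hm.le_of_le hmy inf_le_left).trans inf_le_right

end Lattice

variable {L : Type*} [Lattice L] [OrderBot L]

theorem le_of_forall_rel_bot (h : SectionallyComplemented L) {c d : LatCon L}
    (hbot : ∀ x, c.r x ⊥ → d.r x ⊥) : c ≤ d := by
  intro a b hab
  have hc := (c.rel_iff_inf_rel_sup).mp hab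
  obtain ⟨s, hs_inf, hs_sup⟩ := h (a ⊓ b) (a ⊔ b) (inf_le_left.trans le_sup_left)
  have hs : c.r s ⊥ := by
    have := c.inf_comp (c.iseqv.refl s) (c.iseqv.symm hc)
    rwa [inf_eq_left.mpr (hs_sup ▸ le_sup_right), inf_comm, hs_inf] at this
  have hd := d.sup_comp (d.iseqv.refl (a ⊓ b)) (d.iseqv.symm (hbot s hs))
  rw [sup_bot_eq, hs_sup] at hd
  exact (d.rel_iff_inf_rel_sup).mpr hd

theorem rel_bot_of_isLeast_class (h : SectionallyComplemented L) {c d : LatCon L} {a b m : L}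
    (hm : IsLeast {x | c.r x a} m) (hcd : {x | c.r x a} = {x | d.r x b})
    {x : L} (hx : c.r x ⊥) : d.r x ⊥ := by
  have hxm : c.r (x ⊓ m) ⊥ := by simpa using c.inf_comp hx (c.iseqv.refl m)
  obtain ⟨t, ht_inf, ht_sup⟩ := h (x ⊓ m) m inf_le_right
  have htm : c.r t m := by
    have := c.sup_comp hxm (c.iseqv.refl t)
    rw [ht_sup, bot_sup_eq] at this
    exact c.iseqv.symm this
  have hmt : m ≤ t := hm.2 (c.iseqv.trans htm hm.1)
  have hxm_bot : x ⊓ m = ⊥ := by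
    rwa [inf_eq_left.mpr (inf_le_right.trans hmt)] at ht_inf
  have hsup : x ⊔ m ∈ {y | d.r y b} := by
    rw [← hcd]
    simpa using c.sup_comp hx hm.1
  have hm_d : m ∈ {y | d.r y b} := hcd ▸ hm.1
  have := d.inf_comp (d.iseqv.refl x) (d.iseqv.trans hsup (d.iseqv.symm hm_d))
  rwa [inf_sup_self, hxm_bot] at this

theorem eq_of_isLeast_class (h : SectionallyComplemented L) {c d : LatCon L} {a b m : L}
    (hm : IsLeast {x | c.r x a} m) (hcd : {x | c.r x a} = {x | d.r x b}) : c = d :=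
  le_antisymm (le_of_forall_rel_bot h fun _ => rel_bot_of_isLeast_class h hm hcd)
    (le_of_forall_rel_bot h fun _ => rel_bot_of_isLeast_class h (hcd ▸ hm) hcd.symm)

end LatCon

/-- Every finite sectionally complemented lattice is regular. -/
theorem regular_of_sectionally_complemented
    (L : Type) [Lattice L] [OrderBot L] [Fintype L]
    (h : SectionallyComplemented L) : RegularLattice L := by
  rintro c d ⟨a, b, hcd⟩
  obtain ⟨m, hm⟩ := c.exists_isLeast_class a
  exact LatCon.eq_of_isLeast_class h hm hcd
end

section
/- For a bounded lattice K, the set M₃[K] of boolean triples ⟨x,y,z⟩ ∈ K³, i.e., triples satisfying x = (x∨y)∧(x∨z), y = (y∨x)∧(y∨z), z = (z∨x)∧(z∨y), forms a lattice under the componentwise order, and it is a bounded lattice. -/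
/-!
The map `t ↦ ((x ⊔ y) ⊓ (x ⊔ z), (y ⊔ x) ⊓ (y ⊔ z), (z ⊔ x) ⊓ (z ⊔ y))` for `t = (x, y, z)` is a
closure operator on `K³` whose closed elements are exactly the boolean triples. The closed
elements of a closure operator are closed under meets and form a lattice (the join of two of them
is the closure of their componentwise join), bounded as soon as `K³` is.
-/

theorem ClosureOperator.infClosed_setOf_isClosed {α : Type*} [SemilatticeInf α]
    (c : ClosureOperator α) : InfClosed {x | c.IsClosed x} := fun x hx y hy =>
  c.isClosed_iff_closure_le.2 <|
    (c.closure_inf_le x y).trans_eq (by rw [hx.closure_eq, hy.closure_eq])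

section BooleanTriples

variable {α : Type*} [Lattice α]

variable (α) in
def booleanTriples : Set (α × α × α) :=
  {t | t.1 = (t.1 ⊔ t.2.1) ⊓ (t.1 ⊔ t.2.2) ∧
       t.2.1 = (t.2.1 ⊔ t.1) ⊓ (t.2.1 ⊔ t.2.2) ∧
       t.2.2 = (t.2.2 ⊔ t.1) ⊓ (t.2.2 ⊔ t.2.1)}

def booleanHull (t : α × α × α) : α × α × α :=
  ((t.1 ⊔ t.2.1) ⊓ (t.1 ⊔ t.2.2),
   (t.2.1 ⊔ t.1) ⊓ (t.2.1 ⊔ t.2.2),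
   (t.2.2 ⊔ t.1) ⊓ (t.2.2 ⊔ t.2.1))

theorem mem_booleanTriples_iff {t : α × α × α} : t ∈ booleanTriples α ↔ booleanHull t = t := by
  simp only [booleanTriples, booleanHull, Set.mem_ofPred_eq, Prod.ext_iff, eq_comm]

theorem le_booleanHull (t : α × α × α) : t ≤ booleanHull t :=
  ⟨le_inf le_sup_left le_sup_left, le_inf le_sup_left le_sup_left,
    le_inf le_sup_left le_sup_left⟩

theorem booleanHull_mono : Monotone (booleanHull (α := α)) := by
  rintro ⟨a, b, c⟩ ⟨x, y, z⟩ ⟨hax, hby, hcz⟩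
  exact ⟨inf_le_inf (sup_le_sup hax hby) (sup_le_sup hax hcz),
    inf_le_inf (sup_le_sup hby hax) (sup_le_sup hby hcz),
    inf_le_inf (sup_le_sup hcz hax) (sup_le_sup hcz hby)⟩

theorem booleanHull_booleanHull_le (t : α × α × α) :
    booleanHull (booleanHull t) ≤ booleanHull t := by
  -- the `i`-th and `j`-th entries of `booleanHull t` both lie below `t i ⊔ t j`
  refine ⟨inf_le_inf ?_ ?_, inf_le_inf ?_ ?_, inf_le_inf ?_ ?_⟩ <;>
    refine sup_le ?_ ?_ <;>
    first
    | exact inf_le_left | exact inf_le_right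
    | exact inf_le_left.trans_eq (sup_comm _ _) | exact inf_le_right.trans_eq (sup_comm _ _)

def booleanClosure : ClosureOperator (α × α × α) :=
  { ClosureOperator.mk' booleanHull booleanHull_mono le_booleanHull booleanHull_booleanHull_le with
    IsClosed := (· ∈ booleanTriples α)
    isClosed_iff := mem_booleanTriples_iff }

theorem infClosed_booleanTriples : InfClosed (booleanTriples α) :=
  (booleanClosure (α := α)).infClosed_setOf_isClosed

instance : Lattice (booleanTriples α) :=
  (booleanClosure (α := α)).gi.liftLattice

instance [BoundedOrder α] : BoundedOrder (booleanTriples α) :=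
  (booleanClosure (α := α)).gi.liftBoundedOrder

end BooleanTriples

/-- **Grätzer–Wehrung.** For a bounded lattice `K`, the set `M₃[K]` of boolean triples
`⟨x,y,z⟩ ∈ K³` (those satisfying `x = (x∨y)∧(x∨z)`, `y = (y∨x)∧(y∨z)`,
`z = (z∨x)∧(z∨y)`) forms a lattice under the componentwise order: it is closed under
componentwise meet, every pair of boolean triples has a least upper bound (and a greatest
lower bound) within the set, and it is bounded. -/
theorem boolean_triples_form_bounded_lattice (K : Type) [Lattice K] [BoundedOrder K] :
    let B : Set (K × K × K) :=
      {t | t.1 = (t.1 ⊔ t.2.1) ⊓ (t.1 ⊔ t.2.2) ∧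
           t.2.1 = (t.2.1 ⊔ t.1) ⊓ (t.2.1 ⊔ t.2.2) ∧
           t.2.2 = (t.2.2 ⊔ t.1) ⊓ (t.2.2 ⊔ t.2.1)}
    (∀ x y : K × K × K, x ∈ B → y ∈ B → x ⊓ y ∈ B) ∧
    (∀ x y : B, ∃ z : B, IsGLB {x, y} z) ∧
    (∀ x y : B, ∃ z : B, IsLUB {x, y} z) ∧
    (∃ top : B, IsTop top) ∧ (∃ bot : B, IsBot bot) := by
  show (∀ x y, x ∈ booleanTriples K → y ∈ booleanTriples K → x ⊓ y ∈ booleanTriples K) ∧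
    (∀ x y : booleanTriples K, ∃ z : booleanTriples K, IsGLB {x, y} z) ∧
    (∀ x y : booleanTriples K, ∃ z : booleanTriples K, IsLUB {x, y} z) ∧
    (∃ top : booleanTriples K, IsTop top) ∧ (∃ bot : booleanTriples K, IsBot bot)
  exact ⟨fun _ _ hx hy => infClosed_booleanTriples hx hy,
    fun x y => ⟨x ⊓ y, isGLB_pair⟩, fun x y => ⟨x ⊔ y, isLUB_pair⟩,
    ⟨⊤, isTop_top⟩, ⟨⊥, isBot_bot⟩⟩
end

section
/- Every finite uniform lattice is regular: if all congruence classes of every congruence of a finite lattice L have the same cardinality, then every congruence of L is determined by any one of its classes. -/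
/-- A lattice is uniform if, for every congruence, all congruence classes have the same
cardinality. -/
def UniformLattice (L : Type*) [Lattice L] : Prop :=
  ∀ c : LatCon L, ∀ a b : L, Nat.card {x | c.r x a} = Nat.card {x | c.r x b}

/-!
If congruences `c` and `d` share the class of `a`, their meet `m` has that class too. By
uniformity every `m`-class then has the size of every `c`-class, and since each `m`-class lies
in the `c`-class of the same element, `m = c`; hence `c ≤ d`, and symmetrically `d ≤ c`.
-/

namespace LatCon
variable {L : Type*} [Lattice L]

def meet (c d : LatCon L) : LatCon L where
  r a b := c.r a b ∧ d.r a b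
  iseqv := ⟨fun a => ⟨c.refl a, d.refl a⟩,
    fun ⟨h₁, h₂⟩ => ⟨c.symm h₁, d.symm h₂⟩,
    fun ⟨h₁, h₂⟩ ⟨h₃, h₄⟩ => ⟨c.trans h₁ h₃, d.trans h₂ h₄⟩⟩
  sup_comp := fun ⟨h₁, h₂⟩ ⟨h₃, h₄⟩ => ⟨c.sup_comp h₁ h₃, d.sup_comp h₂ h₄⟩
  inf_comp := fun ⟨h₁, h₂⟩ ⟨h₃, h₄⟩ => ⟨c.inf_comp h₁ h₃, d.inf_comp h₂ h₄⟩

theorem meet_le_left (c d : LatCon L) : c.meet d ≤ c := fun _ _ h => h.1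

theorem meet_le_right (c d : LatCon L) : c.meet d ≤ d := fun _ _ h => h.2

theorem class_eq_of_rel {c : LatCon L} {a b : L} (hab : c.r a b) :
    {x | c.r x a} = {x | c.r x b} :=
  Set.ext fun _ => ⟨fun hx => c.trans hx hab, fun hx => c.trans hx (c.symm hab)⟩

theorem le_of_le_of_card_class_le [Finite L] {m c : LatCon L} (hmc : m ≤ c)
    (hcard : ∀ x, Nat.card {z | c.r z x} ≤ Nat.card {z | m.r z x}) : c ≤ m := by
  intro x y hxy
  have hclass : {z | m.r z y} = {z | c.r z y} := by
    refine Set.eq_of_subset_of_ncard_le (fun z hz => hmc z y hz) ?_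
    simpa only [Nat.card_coe_set_eq] using hcard y
  exact hclass.superset hxy

end LatCon

namespace UniformLattice
variable {L : Type*} [Lattice L] [Finite L]

theorem le_of_le_of_class_eq (h : UniformLattice L) {m c : LatCon L} (hmc : m ≤ c) (a : L)
    (ha : {x | m.r x a} = {x | c.r x a}) : c ≤ m :=
  LatCon.le_of_le_of_card_class_le hmc fun x => by rw [h c x a, h m x a, ha]

theorem le_of_class_eq (h : UniformLattice L) {c d : LatCon L} (a : L)
    (hcd : {x | c.r x a} = {x | d.r x a}) : c ≤ d := by
  have hmeet : {x | (c.meet d).r x a} = {x | c.r x a} :=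
    Set.ext fun x => ⟨And.left, fun hx => ⟨hx, hcd.subset hx⟩⟩
  exact (h.le_of_le_of_class_eq (c.meet_le_left d) a hmeet).trans (c.meet_le_right d)

end UniformLattice

/-- Every finite uniform lattice is regular. -/
theorem regular_of_uniform (L : Type) [Lattice L] [Fintype L]
    (h : UniformLattice L) : RegularLattice L := by
  rintro c d ⟨a, b, hab⟩
  have hda : d.r a b := hab.subset (c.refl a)
  have hcd : {x | c.r x a} = {x | d.r x a} := hab.trans (LatCon.class_eq_of_rel hda).symm
  exact le_antisymm (h.le_of_class_eq a hcd) (h.le_of_class_eq a hcd.symm)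
end
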